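/- Let H = (V, E) be a Sperner hypergraph in the family L0' and let e₀ ∈ E be an edge with |e₀| > 2. Then the Sperner subhypergraph (H/e₀)* of the contraction H/e₀ belongs to L0'. -/

import Mathlib

open Finset Polynomial

variable {α : Type}

/-- `φ : α → Fin k` is a weak proper coloring of the hypergraph with edge set `E`:
every edge contains two vertices with different colors. -/
def IsWeakProper [DecidableEq α] (E : Finset (Finset α)) {k : ℕ} (φ : α → Fin k) : Prop :=
  ∀ e ∈ E, ∃ u ∈ e, ∃ v ∈ e, φ u ≠ φ v

instance [DecidableEq α] (E : Finset (Finset α)) {k : ℕ} (φ : α → Fin k) :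
    Decidable (IsWeakProper E φ) := by
  unfold IsWeakProper; infer_instance

/-- The number of weak proper `k`-colorings of the hypergraph with vertex set `α`
(a finite type) and edge set `E`. -/
def countColorings [Fintype α] [DecidableEq α] (E : Finset (Finset α)) (k : ℕ) : ℕ :=
  (Finset.univ.filter fun φ : α → Fin k => IsWeakProper E φ).card

/-- `(v 0, es 0, v 1, es 1, …, v (t-1), es (t-1), v 0)` is a cycle in the hypergraph
with edge set `E`: `t ≥ 2`, the vertices are pairwise distinct, the edges are pairwise
distinct edges of `E`, and `{v i, v (i+1)} ⊆ es i` for every `i` (cyclically). -/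
def IsCycle (E : Finset (Finset α)) (t : ℕ) (v : ZMod t → α) (es : ZMod t → Finset α) : Prop :=
  2 ≤ t ∧ Function.Injective v ∧ Function.Injective es ∧
    (∀ i, es i ∈ E) ∧ ∀ i, v i ∈ es i ∧ v (i + 1) ∈ es i

/-- Membership in the family `L0`: every edge has even cardinality, and for every cycle
there exist two distinct vertices `x, y` in the union of the edges of the cycle with
`{x, y} ∈ E`. -/
def MemL0 [DecidableEq α] (E : Finset (Finset α)) : Prop :=
  (∀ e ∈ E, Even e.card) ∧
    ∀ (t : ℕ) (v : ZMod t → α) (es : ZMod t → Finset α), IsCycle E t v es →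
      ∃ x y : α, x ≠ y ∧ (∃ i, x ∈ es i) ∧ (∃ j, y ∈ es j) ∧ ({x, y} : Finset α) ∈ E

/-- Membership in the family `L1`: every edge has even cardinality, and every cycle
contains an edge of cardinality `2`. -/
def MemL1 (E : Finset (Finset α)) : Prop :=
  (∀ e ∈ E, Even e.card) ∧
    ∀ (t : ℕ) (v : ZMod t → α) (es : ZMod t → Finset α), IsCycle E t v es →
      ∃ i, (es i).card = 2

/-- The simple graph whose edges are the `2`-element members of `E`. -/
def pairGraph [DecidableEq α] (E : Finset (Finset α)) : SimpleGraph α where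
  Adj x y := x ≠ y ∧ ({x, y} : Finset α) ∈ E
  symm := by
    constructor
    intro x y h
    exact ⟨Ne.symm h.1, by rw [Finset.pair_comm]; exact h.2⟩
  loopless := by constructor; intro x h; exact h.1 rfl

/-- Membership in the family `L0'`: `E` is in `L0` and the graph on the vertex set
with edge set `E₂ = {e ∈ E : |e| = 2}` is connected. -/
def MemL0' [DecidableEq α] (E : Finset (Finset α)) : Prop :=
  MemL0 E ∧ (pairGraph (E.filter fun e => e.card = 2)).Connected

/-- A hypergraph is Sperner if no edge is contained in another distinct edge. -/
def IsSperner (E : Finset (Finset α)) : Prop :=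
  ∀ e₁ ∈ E, ∀ e₂ ∈ E, e₁ ⊆ e₂ → e₁ = e₂

/-- The edge set of the Sperner subhypergraph: the edges of `E` that are minimal
with respect to inclusion. -/
def minimalEdges [DecidableEq α] (E : Finset (Finset α)) : Finset (Finset α) :=
  E.filter fun e => ∀ e' ∈ E, e' ⊆ e → e' = e

/-- The map identifying all vertices of `e` into the single new vertex `none`;
vertices outside `e` are kept (as `some`-values). -/
def contractMap [DecidableEq α] (e : Finset α) : α → Option {v : α // v ∉ e} :=
  fun v => if h : v ∈ e then none else some ⟨v, h⟩

/-- The edge set of the contraction `H/e`: remove `e` and identify all of its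
vertices into the single new vertex `none`. -/
def contractEdges [DecidableEq α] (E : Finset (Finset α)) (e : Finset α) :
    Finset (Finset (Option {v : α // v ∉ e})) :=
  (E.erase e).image fun e' => e'.image (contractMap e)


lemma cm_none [DecidableEq α] {e₀ : Finset α} {x : α} : contractMap e₀ x = none ↔ x ∈ e₀ := by
  unfold contractMap
  split <;> simp_all

lemma cm_some_mem [DecidableEq α] {e₀ f : Finset α} {x : α} (h : x ∉ e₀) :
    some ⟨x, h⟩ ∈ f.image (contractMap e₀) ↔ x ∈ f := by
  constructor
  · rintro hm
    obtain ⟨y, hy, hyx⟩ := Finset.mem_image.1 hm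
    unfold contractMap at hyx
    split at hyx
    · simp at hyx
    · simp only [Option.some.injEq, Subtype.mk.injEq] at hyx
      exact hyx ▸ hy
  · intro hx
    refine Finset.mem_image.2 ⟨x, hx, ?_⟩
    unfold contractMap; simp [h]

lemma cm_none_mem [DecidableEq α] {e₀ f : Finset α} :
    none ∈ f.image (contractMap e₀) ↔ ∃ x ∈ f, x ∈ e₀ := by
  constructor
  · intro hm
    obtain ⟨y, hy, hyx⟩ := Finset.mem_image.1 hm
    exact ⟨y, hy, cm_none.1 hyx⟩
  · rintro ⟨x, hx, hxe⟩
    exact Finset.mem_image.2 ⟨x, hx, cm_none.2 hxe⟩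

lemma pair_not_sub [DecidableEq α] {E : Finset (Finset α)} (hSp : IsSperner E)
    {e₀ : Finset α} (he₀ : e₀ ∈ E) (hcard : 2 < e₀.card) {x y : α}
    (hxy : x ≠ y) (hp : ({x, y} : Finset α) ∈ E) : ¬(x ∈ e₀ ∧ y ∈ e₀) := by
  rintro ⟨hx, hy⟩
  have hsub : ({x, y} : Finset α) ⊆ e₀ := by
    intro z hz; simp only [Finset.mem_insert, Finset.mem_singleton] at hz
    rcases hz with rfl | rfl <;> assumption
  have := hSp _ hp _ he₀ hsub
  rw [← this] at hcard
  rw [Finset.card_insert_of_notMem (by simp [hxy]), Finset.card_singleton] at hcard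
  omega

lemma two_le_card_contract [DecidableEq α] {E : Finset (Finset α)}
    (hne : ∀ e ∈ E, e.Nonempty) (hSp : IsSperner E) (hev : ∀ e ∈ E, Even e.card)
    {e₀ : Finset α} (he₀ : e₀ ∈ E) {g : Finset (Option {v : α // v ∉ e₀})}
    (hg : g ∈ contractEdges E e₀) : 2 ≤ g.card := by
  obtain ⟨f, hf, rfl⟩ := Finset.mem_image.1 hg
  have hfE : f ∈ E := Finset.mem_of_mem_erase hf
  have hfne : f ≠ e₀ := Finset.ne_of_mem_erase hf
  by_contra h
  push_neg at h
  interval_cases hc : (f.image (contractMap e₀)).card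
  · have := hne f hfE
    simp only [Finset.card_eq_zero, Finset.image_eq_empty] at hc
    exact (this.ne_empty hc).elim
  · obtain ⟨b, hb⟩ := Finset.card_eq_one.1 hc
    cases b with
    | none =>
      have hsub : f ⊆ e₀ := by
        intro z hz
        have : contractMap e₀ z ∈ f.image (contractMap e₀) := Finset.mem_image_of_mem _ hz
        rw [hb, Finset.mem_singleton] at this
        exact cm_none.1 this
      exact hfne (hSp _ hfE _ he₀ hsub)
    | some z =>
      have hsub : f ⊆ {z.1} := by
        intro w hw
        have : contractMap e₀ w ∈ f.image (contractMap e₀) := Finset.mem_image_of_mem _ hw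
        rw [hb, Finset.mem_singleton] at this
        unfold contractMap at this
        split at this
        · simp at this
        · simp only [Option.some.injEq] at this
          simp [← congrArg Subtype.val this]
      have := Finset.card_le_card hsub
      simp only [Finset.card_singleton] at this
      obtain ⟨k, hk⟩ := hev f hfE
      have hne' := (hne f hfE).card_pos
      omega

lemma pair_minimal [DecidableEq α] {E : Finset (Finset α)}
    (hne : ∀ e ∈ E, e.Nonempty) (hSp : IsSperner E) (hev : ∀ e ∈ E, Even e.card)
    {e₀ : Finset α} (he₀ : e₀ ∈ E) {g : Finset (Option {v : α // v ∉ e₀})}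
    (hg : g ∈ contractEdges E e₀) (hg2 : g.card = 2) :
    g ∈ minimalEdges (contractEdges E e₀) := by
  rw [minimalEdges, Finset.mem_filter]
  refine ⟨hg, fun e' he' hsub => ?_⟩
  have h2 := two_le_card_contract hne hSp hev he₀ he'
  exact Finset.eq_of_subset_of_card_le hsub (by omega)

lemma pair_push [DecidableEq α] {E : Finset (Finset α)}
    (hne : ∀ e ∈ E, e.Nonempty) (hSp : IsSperner E) (hev : ∀ e ∈ E, Even e.card)
    {e₀ : Finset α} (he₀ : e₀ ∈ E) (hcard : 2 < e₀.card) {x y : α}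
    (hxy : x ≠ y) (hp : ({x, y} : Finset α) ∈ E) :
    contractMap e₀ x ≠ contractMap e₀ y ∧
      ({contractMap e₀ x, contractMap e₀ y} : Finset (Option {v : α // v ∉ e₀})) ∈
        minimalEdges (contractEdges E e₀) := by
  have hnb := pair_not_sub hSp he₀ hcard hxy hp
  have hne' : contractMap e₀ x ≠ contractMap e₀ y := by
    unfold contractMap
    split <;> split <;> simp_all
  have himg : ({x, y} : Finset α).image (contractMap e₀) =
      {contractMap e₀ x, contractMap e₀ y} := by
    simp [Finset.image_insert]
  have hxyne : ({x, y} : Finset α) ≠ e₀ := by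
    intro h
    rw [← h] at hcard
    rw [Finset.card_insert_of_notMem (by simp [hxy]), Finset.card_singleton] at hcard
    omega
  have hmem : ({contractMap e₀ x, contractMap e₀ y} : Finset (Option {v : α // v ∉ e₀})) ∈
      contractEdges E e₀ := by
    rw [← himg]
    exact Finset.mem_image_of_mem _ (Finset.mem_erase.2 ⟨hxyne, hp⟩)
  refine ⟨hne', pair_minimal hne hSp hev he₀ hmem ?_⟩
  rw [Finset.card_insert_of_notMem (by simp [hne']), Finset.card_singleton]

lemma card_image_contract [DecidableEq α] {e₀ f : Finset α} :
    (f.image (contractMap e₀)).card =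
      (f \ e₀).card + if (f ∩ e₀).Nonempty then 1 else 0 := by
  have hinj : Set.InjOn (contractMap e₀) (f \ e₀ : Finset α) := by
    intro p hp q hq hpq
    rw [Finset.mem_coe, Finset.mem_sdiff] at hp hq
    unfold contractMap at hpq
    rw [dif_neg hp.2, dif_neg hq.2] at hpq
    simpa using hpq
  split
  case isTrue h =>
    have himg : f.image (contractMap e₀) =
        insert none ((f \ e₀).image (contractMap e₀)) := by
      ext b
      simp only [Finset.mem_image, Finset.mem_insert, Finset.mem_sdiff]
      constructor
      · rintro ⟨x, hx, rfl⟩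
        by_cases hxe : x ∈ e₀
        · left; exact cm_none.2 hxe
        · right; exact ⟨x, ⟨hx, hxe⟩, rfl⟩
      · rintro (rfl | ⟨x, ⟨hx, _⟩, rfl⟩)
        · obtain ⟨z, hz⟩ := h
          rw [Finset.mem_inter] at hz
          exact ⟨z, hz.1, cm_none.2 hz.2⟩
        · exact ⟨x, hx, rfl⟩
    rw [himg, Finset.card_insert_of_notMem, Finset.card_image_of_injOn hinj]
    intro hn
    obtain ⟨x, hx, hc⟩ := Finset.mem_image.1 hn
    exact (Finset.mem_sdiff.1 hx).2 (cm_none.1 hc)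
  case isFalse h =>
    have hfe : f \ e₀ = f := by
      rw [Finset.sdiff_eq_self_iff_disjoint, Finset.disjoint_left]
      intro x hx hx'
      exact h ⟨x, Finset.mem_inter.2 ⟨hx, hx'⟩⟩
    have hci := Finset.card_image_of_injOn hinj
    rw [hfe] at hci
    rw [add_zero, hfe] at *
    exact hci

/-- If `H` is a Sperner hypergraph in `L0'` and `e₀` is an edge with `|e₀| > 2`, then
the Sperner subhypergraph `(H/e₀)*` of the contraction belongs to `L0'`. -/
theorem stmt14 {α : Type} [Fintype α] [DecidableEq α] (E : Finset (Finset α))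
    (hne : ∀ e ∈ E, e.Nonempty) (hSp : IsSperner E) (hE : MemL0' E)
    (e₀ : Finset α) (he₀ : e₀ ∈ E) (hcard : 2 < e₀.card) :
    MemL0' (minimalEdges (contractEdges E e₀)) := by
  obtain ⟨⟨hev, hcyc⟩, hconn⟩ := hE
  have hpush := fun {x y : α} (hxy : x ≠ y) (hp : ({x, y} : Finset α) ∈ E) =>
    pair_push hne hSp hev he₀ hcard hxy hp
  refine ⟨⟨?_, ?_⟩, ?_⟩
  · -- evenness
    intro g hg
    simp only [minimalEdges, Finset.mem_filter] at hg
    obtain ⟨hgc, hmin⟩ := hg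
    obtain ⟨f, hf, rfl⟩ := Finset.mem_image.1 hgc
    have hfE : f ∈ E := Finset.mem_of_mem_erase hf
    have hfne : f ≠ e₀ := Finset.ne_of_mem_erase hf
    by_cases hk : 2 ≤ (f ∩ e₀).card
    · -- f meets e₀ in ≥ 2 vertices: minimality forces the image to be a pair
      obtain ⟨u, hu, v, hv, huv⟩ := Finset.one_lt_card.1 hk
      rw [Finset.mem_inter] at hu hv
      have h2 : ∀ i : ZMod 2, i = 0 ∨ i = 1 := by decide
      have h01 : (0 : ZMod 2) + 1 = 1 := by decide
      have h10 : (1 : ZMod 2) + 1 = 0 := by decide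
      have hne01 : (1 : ZMod 2) ≠ 0 := by decide
      have hcy : IsCycle E 2 (fun i => if i = 0 then u else v)
          (fun i => if i = 0 then f else e₀) := by
        refine ⟨le_refl 2, ?_, ?_, ?_, ?_⟩
        · intro i j hij
          try dsimp only at hij
          rcases h2 i with rfl | rfl <;> rcases h2 j with rfl | rfl
          · rfl
          · rw [if_pos rfl, if_neg hne01] at hij; exact absurd hij huv
          · rw [if_neg hne01, if_pos rfl] at hij; exact absurd hij.symm huv
          · rfl
        · intro i j hij
          try dsimp only at hij
          rcases h2 i with rfl | rfl <;> rcases h2 j with rfl | rfl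
          · rfl
          · rw [if_pos rfl, if_neg hne01] at hij; exact absurd hij hfne
          · rw [if_neg hne01, if_pos rfl] at hij; exact absurd hij.symm hfne
          · rfl
        · intro i
          try dsimp only
          rcases h2 i with rfl | rfl
          · rw [if_pos rfl]; exact hfE
          · rw [if_neg hne01]; exact he₀
        · intro i
          try dsimp only
          rcases h2 i with rfl | rfl
          · rw [h01]; constructor
            · rw [if_pos rfl, if_pos rfl]; exact hu.1
            · rw [if_neg hne01, if_pos rfl]; exact hv.1
          · rw [h10]; constructor
            · rw [if_neg hne01, if_neg hne01]; exact hv.2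
            · rw [if_pos rfl, if_neg hne01]; exact hu.2
      obtain ⟨x, y, hxy, ⟨i, hxi⟩, ⟨j, hyj⟩, hpE⟩ := hcyc 2 _ _ hcy
      have hmemf : ∀ z : α, (z ∈ f ∨ z ∈ e₀) →
          contractMap e₀ z ∈ f.image (contractMap e₀) := by
        intro z hz
        by_cases hze : z ∈ e₀
        · rw [cm_none.2 hze]
          exact cm_none_mem.2 ⟨u, hu.1, hu.2⟩
        · rcases hz with hz | hz
          · exact Finset.mem_image_of_mem _ hz
          · exact (hze hz).elim
      have hxf : x ∈ f ∨ x ∈ e₀ := by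
        try dsimp only at hxi
        by_cases hi0 : i = 0
        · rw [if_pos hi0] at hxi; exact Or.inl hxi
        · rw [if_neg hi0] at hxi; exact Or.inr hxi
      have hyf : y ∈ f ∨ y ∈ e₀ := by
        try dsimp only at hyj
        by_cases hj0 : j = 0
        · rw [if_pos hj0] at hyj; exact Or.inl hyj
        · rw [if_neg hj0] at hyj; exact Or.inr hyj
      have hsub : ({contractMap e₀ x, contractMap e₀ y} :
          Finset (Option {v : α // v ∉ e₀})) ⊆ f.image (contractMap e₀) := by
        intro b hb
        rw [Finset.mem_insert, Finset.mem_singleton] at hb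
        rcases hb with rfl | rfl
        · exact hmemf x hxf
        · exact hmemf y hyf
      have hpm := hpush hxy hpE
      have hpc : ({contractMap e₀ x, contractMap e₀ y} :
          Finset (Option {v : α // v ∉ e₀})) ∈ contractEdges E e₀ := by
        have := hpm.2
        simp only [minimalEdges, Finset.mem_filter] at this
        exact this.1
      have heq := hmin _ hpc hsub
      rw [← heq, Finset.card_insert_of_notMem (by simp [hpm.1]), Finset.card_singleton]
      exact even_two
    · -- f meets e₀ in ≤ 1 vertex
      rw [card_image_contract]
      obtain ⟨m, hm⟩ := hev f hfE
      have hsum := Finset.card_sdiff_add_card_inter f e₀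
      push_neg at hk
      split_ifs with h
      · have h1 : 1 ≤ (f ∩ e₀).card := Finset.card_pos.2 h
        exact ⟨m, by omega⟩
      · have h0 : (f ∩ e₀).card = 0 := by
          rw [Finset.card_eq_zero, ← Finset.not_nonempty_iff_eq_empty]
          exact h
        exact ⟨m, by omega⟩
  · -- cycle condition
    intro t vv es hcy
    obtain ⟨ht2, hvinj, hesinj, hesM, hmem⟩ := hcy
    haveI : NeZero t := ⟨by omega⟩
    -- choose preimage edges
    have hch : ∀ i : ZMod t, ∃ f : Finset α, f ∈ E.erase e₀ ∧
        es i = f.image (contractMap e₀) := by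
      intro i
      have hi := hesM i
      simp only [minimalEdges, Finset.mem_filter] at hi
      obtain ⟨f, hf, hfi⟩ := Finset.mem_image.1 hi.1
      exact ⟨f, hf, hfi.symm⟩
    choose f hfE' hfes using hch
    have hfinj : Function.Injective f := by
      intro i j h
      exact hesinj (by rw [hfes, hfes, h])
    have hfEm : ∀ i, f i ∈ E := fun i => Finset.mem_of_mem_erase (hfE' i)
    have hfne : ∀ i, f i ≠ e₀ := fun i => Finset.ne_of_mem_erase (hfE' i)
    have hpush2 : ∀ z : α, (∃ i, z ∈ f i) ∨ (z ∈ e₀ ∧ ∃ i, (none : Option {v : α // v ∉ e₀}) ∈ es i) →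
        ∃ i, contractMap e₀ z ∈ es i := by
      intro z hz
      by_cases hze : z ∈ e₀
      · rw [cm_none.2 hze]
        rcases hz with ⟨i, hi⟩ | ⟨_, i, hi⟩
        · exact ⟨i, by rw [hfes]; exact cm_none_mem.2 ⟨z, hi, hze⟩⟩
        · exact ⟨i, hi⟩
      · rcases hz with ⟨i, hi⟩ | ⟨hc, _⟩
        · exact ⟨i, by rw [hfes]; exact Finset.mem_image_of_mem _ hi⟩
        · exact (hze hc).elim
    have finishing : ∀ x y : α, x ≠ y → ({x, y} : Finset α) ∈ E →
        ((∃ i, x ∈ f i) ∨ (x ∈ e₀ ∧ ∃ i, (none : Option {v : α // v ∉ e₀}) ∈ es i)) →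
        ((∃ j, y ∈ f j) ∨ (y ∈ e₀ ∧ ∃ j, (none : Option {v : α // v ∉ e₀}) ∈ es j)) →
        ∃ X Y : Option {v : α // v ∉ e₀}, X ≠ Y ∧ (∃ i, X ∈ es i) ∧ (∃ j, Y ∈ es j) ∧
          ({X, Y} : Finset (Option {v : α // v ∉ e₀})) ∈ minimalEdges (contractEdges E e₀) := by
      intro x y hxy hp hx hy
      exact ⟨contractMap e₀ x, contractMap e₀ y, (hpush hxy hp).1,
        hpush2 x hx, hpush2 y hy, (hpush hxy hp).2⟩
    have hsome_mem : ∀ (i : ZMod t) (x : α) (hx : x ∉ e₀),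
        vv i = some ⟨x, hx⟩ → ∀ j, vv i ∈ es j → x ∈ f j := by
      intro i x hx hvi j hj
      rw [hvi, hfes j] at hj
      exact (cm_some_mem hx).1 hj
    by_cases hA : ∃ i₀, vv i₀ = none ∧ ¬∃ a, a ∈ f i₀ ∧ a ∈ f (i₀ - 1) ∧ a ∈ e₀
    · -- insert e₀ into the cycle: a cycle of length t + 1
      obtain ⟨i₀, hnone, hno⟩ := hA
      obtain ⟨a, haf, hae⟩ : ∃ a, a ∈ f i₀ ∧ a ∈ e₀ := by
        have h1 : (none : Option {v : α // v ∉ e₀}) ∈ es i₀ := hnone ▸ (hmem i₀).1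
        rw [hfes i₀] at h1
        obtain ⟨z, hz, hze⟩ := cm_none_mem.1 h1
        exact ⟨z, hz, hze⟩
      obtain ⟨b, hbf, hbe⟩ : ∃ b, b ∈ f (i₀ - 1) ∧ b ∈ e₀ := by
        have h1 : vv (i₀ - 1 + 1) ∈ es (i₀ - 1) := (hmem (i₀ - 1)).2
        rw [sub_add_cancel, hnone, hfes (i₀ - 1)] at h1
        obtain ⟨z, hz, hze⟩ := cm_none_mem.1 h1
        exact ⟨z, hz, hze⟩
      have hab : a ≠ b := fun h => hno ⟨a, haf, h ▸ hbf, hae⟩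
      have hnes : ∃ i, (none : Option {v : α // v ∉ e₀}) ∈ es i :=
        ⟨i₀, hnone ▸ (hmem i₀).1⟩
      have hvlt : ∀ k : ZMod (t + 1), k.val < t + 1 := fun k => ZMod.val_lt k
      have hvi : ∀ k k' : ZMod (t + 1), k.val = k'.val → k = k' :=
        fun k k' h => ZMod.val_injective _ h
      have hci : ∀ m m' : ℕ, m < t → m' < t → (m : ZMod t) = (m' : ZMod t) → m = m' := by
        intro m m' hm hm' h
        have h2 := congrArg ZMod.val h
        rwa [ZMod.val_cast_of_lt hm, ZMod.val_cast_of_lt hm'] at h2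
      have hsucc : ∀ k : ZMod (t + 1), (k + 1).val = if k.val = t then 0 else k.val + 1 := by
        intro k
        have h1 : (1 : ZMod (t + 1)).val = 1 := by
          rw [ZMod.val_one_eq_one_mod]
          exact Nat.mod_eq_of_lt (by omega)
        rw [ZMod.val_add, h1]
        split_ifs with h
        · rw [h]; exact Nat.mod_self (t + 1)
        · exact Nat.mod_eq_of_lt (by have := hvlt k; omega)
      have hmidne : ∀ m : ℕ, 0 < m → m < t → vv ((m : ZMod t) + i₀) ≠ none := by
        intro m h0 hm hvv
        have h1 : (m : ZMod t) + i₀ = i₀ := hvinj (hvv.trans hnone.symm)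
        have h2 : (m : ZMod t) + i₀ = 0 + i₀ := by rw [h1, zero_add]
        have h3 : (m : ZMod t) = 0 := add_right_cancel h2
        have h4 : m = 0 := hci m 0 hm (by omega) (by rw [h3, Nat.cast_zero])
        omega
      set g : ZMod (t + 1) → Finset α :=
        fun k => if k.val = t then e₀ else f ((k.val : ZMod t) + i₀) with hgdef
      set w : ZMod (t + 1) → α := fun k =>
        (vv ((k.val : ZMod t) + i₀)).elim (if k.val = 0 then a else b) Subtype.val with hwdef
      have hgval : ∀ k : ZMod (t + 1),
          (k.val = t ∧ g k = e₀) ∨ (k.val < t ∧ g k = f ((k.val : ZMod t) + i₀)) := by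
        intro k
        by_cases h : k.val = t
        · exact Or.inl ⟨h, by simp [hgdef, h]⟩
        · exact Or.inr ⟨by have := hvlt k; omega, by simp [hgdef, h]⟩
      have hwval : ∀ k : ZMod (t + 1),
          (k.val = 0 ∧ w k = a) ∨ (k.val = t ∧ w k = b) ∨
          (0 < k.val ∧ k.val < t ∧ ∃ (x : α) (hx : x ∉ e₀),
            vv ((k.val : ZMod t) + i₀) = some ⟨x, hx⟩ ∧ w k = x) := by
        intro k
        by_cases h0 : k.val = 0
        · refine Or.inl ⟨h0, ?_⟩
          show (vv ((k.val : ZMod t) + i₀)).elim (if k.val = 0 then a else b) Subtype.val = a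
          rw [h0, Nat.cast_zero, zero_add, hnone]
          show (if (0 : ℕ) = 0 then a else b) = a
          rw [if_pos rfl]
        by_cases ht' : k.val = t
        · refine Or.inr (Or.inl ⟨ht', ?_⟩)
          show (vv ((k.val : ZMod t) + i₀)).elim (if k.val = 0 then a else b) Subtype.val = b
          rw [ht', ZMod.natCast_self, zero_add, hnone]
          show (if t = 0 then a else b) = b
          rw [if_neg (by omega)]
        · have hlt : k.val < t := by have := hvlt k; omega
          cases hv : vv ((k.val : ZMod t) + i₀) with
          | none => exact absurd hv (hmidne k.val (by omega) hlt)
          | some z =>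
            refine Or.inr (Or.inr ⟨by omega, hlt, z.1, z.2, ?_, ?_⟩)
            · exact rfl
            · show (vv ((k.val : ZMod t) + i₀)).elim (if k.val = 0 then a else b) Subtype.val = z.1
              rw [hv]
              rfl
      have hginj : Function.Injective g := by
        intro k k' h
        rcases hgval k with ⟨h1, hg1⟩ | ⟨h1, hg1⟩ <;>
          rcases hgval k' with ⟨h2, hg2⟩ | ⟨h2, hg2⟩
        · exact hvi _ _ (h1.trans h2.symm)
        · rw [hg1, hg2] at h; exact absurd h.symm (hfne _)
        · rw [hg1, hg2] at h; exact absurd h (hfne _)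
        · rw [hg1, hg2] at h
          have h3 : (k.val : ZMod t) = (k'.val : ZMod t) := add_right_cancel (hfinj h)
          exact hvi _ _ (hci _ _ h1 h2 h3)
      have hgE : ∀ k, g k ∈ E := by
        intro k
        rcases hgval k with ⟨_, hg1⟩ | ⟨_, hg1⟩
        · rw [hg1]; exact he₀
        · rw [hg1]; exact hfEm _
      have hwinj : Function.Injective w := by
        intro k k' h
        rcases hwval k with ⟨h1, hw1⟩ | ⟨h1, hw1⟩ | ⟨h1, h1', x, hx, hs1, hw1⟩ <;>
          rcases hwval k' with ⟨h2, hw2⟩ | ⟨h2, hw2⟩ | ⟨h2, h2', y, hy, hs2, hw2⟩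
        · exact hvi _ _ (h1.trans h2.symm)
        · exact absurd (by rw [← hw1, h, hw2] : a = b) hab
        · exact absurd hae (by rw [show a = y from by rw [← hw1, h, hw2]]; exact hy)
        · exact absurd (by rw [← hw2, ← h, hw1] : a = b) hab
        · exact hvi _ _ (h1.trans h2.symm)
        · exact absurd hbe (by rw [show b = y from by rw [← hw1, h, hw2]]; exact hy)
        · exact absurd hae (by rw [show a = x from by rw [← hw2, ← h, hw1]]; exact hx)
        · exact absurd hbe (by rw [show b = x from by rw [← hw2, ← h, hw1]]; exact hx)
        · have hxy : x = y := by rw [← hw1, h, hw2]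
          have h3 : vv ((k.val : ZMod t) + i₀) = vv ((k'.val : ZMod t) + i₀) := by
            rw [hs1, hs2]; simp [hxy]
          have h4 : (k.val : ZMod t) = (k'.val : ZMod t) := add_right_cancel (hvinj h3)
          exact hvi _ _ (hci _ _ h1' h2' h4)
      have hgw : ∀ k, w k ∈ g k ∧ w (k + 1) ∈ g k := by
        intro k
        constructor
        · rcases hwval k with ⟨h1, hw1⟩ | ⟨h1, hw1⟩ | ⟨h1, h1', x, hx, hs1, hw1⟩
          · rcases hgval k with ⟨h2, _⟩ | ⟨_, hg1⟩
            · omega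
            · rw [hg1, hw1, h1, Nat.cast_zero, zero_add]; exact haf
          · rcases hgval k with ⟨_, hg1⟩ | ⟨h2, _⟩
            · rw [hg1, hw1]; exact hbe
            · omega
          · rcases hgval k with ⟨h2, _⟩ | ⟨_, hg1⟩
            · omega
            · rw [hg1, hw1]
              exact hsome_mem _ x hx hs1 _ (hs1 ▸ (hmem ((k.val : ZMod t) + i₀)).1)
        · rcases hwval (k + 1) with ⟨h1, hw1⟩ | ⟨h1, hw1⟩ | ⟨h1, h1', x, hx, hs1, hw1⟩
          · -- (k+1).val = 0, so k.val = t
            have hkt : k.val = t := by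
              have := hsucc k
              by_cases h : k.val = t
              · exact h
              · rw [if_neg h] at this; omega
            rcases hgval k with ⟨_, hg1⟩ | ⟨h2, _⟩
            · rw [hg1, hw1]; exact hae
            · omega
          · -- (k+1).val = t, so k.val = t - 1
            have hkt : k.val = t - 1 ∧ k.val ≠ t := by
              have h5 := hsucc k
              by_cases h : k.val = t
              · rw [if_pos h] at h5; omega
              · rw [if_neg h] at h5; exact ⟨by omega, h⟩
            rcases hgval k with ⟨h2, _⟩ | ⟨_, hg1⟩
            · exact absurd h2 hkt.2
            · rw [hg1, hw1, hkt.1]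
              have hc1 : ((t - 1 : ℕ) : ZMod t) = -1 := by
                rw [Nat.cast_sub (by omega), ZMod.natCast_self, Nat.cast_one, zero_sub]
              rw [hc1, neg_add_eq_sub]
              exact hbf
          · -- middle
            have hkv : (k + 1).val = k.val + 1 ∧ k.val ≠ t := by
              have h5 := hsucc k
              by_cases h : k.val = t
              · rw [if_pos h] at h5; omega
              · rw [if_neg h] at h5; exact ⟨h5, h⟩
            have hs' : vv (((k.val : ZMod t) + i₀) + 1) = some ⟨x, hx⟩ := by
              have : (((k + 1).val : ℕ) : ZMod t) + i₀ = ((k.val : ZMod t) + i₀) + 1 := by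
                rw [hkv.1]; push_cast; ring
              rw [← this]; exact hs1
            rcases hgval k with ⟨h2, _⟩ | ⟨_, hg1⟩
            · exact absurd h2 hkv.2
            · rw [hg1, hw1]
              exact hsome_mem _ x hx hs' _ (hs' ▸ (hmem ((k.val : ZMod t) + i₀)).2)
      obtain ⟨x, y, hxy, ⟨i, hxi⟩, ⟨j, hyj⟩, hpE⟩ :=
        hcyc (t + 1) w g ⟨by omega, hwinj, hginj, hgE, hgw⟩
      refine finishing x y hxy hpE ?_ ?_
      · rcases hgval i with ⟨_, hg1⟩ | ⟨_, hg1⟩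
        · rw [hg1] at hxi; exact Or.inr ⟨hxi, hnes⟩
        · rw [hg1] at hxi; exact Or.inl ⟨_, hxi⟩
      · rcases hgval j with ⟨_, hg1⟩ | ⟨_, hg1⟩
        · rw [hg1] at hyj; exact Or.inr ⟨hyj, hnes⟩
        · rw [hg1] at hyj; exact Or.inl ⟨_, hyj⟩

    · -- a cycle of the same length t in E
      push_neg at hA
      have hex : ∃ a : α, ∀ i, vv i = none → a ∈ f i ∧ a ∈ f (i - 1) ∧ a ∈ e₀ := by
        by_cases hnone : ∃ i₀, vv i₀ = none
        · obtain ⟨i₀, hi₀⟩ := hnone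
          obtain ⟨a, ha⟩ := hA i₀ hi₀
          refine ⟨a, fun j hj => ?_⟩
          have : j = i₀ := hvinj (hj.trans hi₀.symm)
          rw [this]; exact ha
        · push_neg at hnone
          exact ⟨(hne e₀ he₀).choose, fun j hj => (hnone j hj).elim⟩
      obtain ⟨a, ha⟩ := hex
      set w : ZMod t → α := fun i => (vv i).elim a Subtype.val with hw
      have hwval : ∀ i, (vv i = none ∧ w i = a) ∨
          ∃ (x : α) (hx : x ∉ e₀), vv i = some ⟨x, hx⟩ ∧ w i = x := by
        intro i
        cases hvi : vv i with
        | none => exact Or.inl ⟨rfl, by simp [hw, hvi]⟩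
        | some z => exact Or.inr ⟨z.1, z.2, by simp [hvi], by simp [hw, hvi]⟩
      have hwmem : ∀ i, w i ∈ f i ∧ w (i + 1) ∈ f i := by
        intro i
        constructor
        · rcases hwval i with ⟨hn, hwa⟩ | ⟨x, hx, hs, hwx⟩
          · rw [hwa]; exact (ha i hn).1
          · rw [hwx]; exact hsome_mem i x hx hs i (hs ▸ (hs ▸ (hmem i).1))
        · rcases hwval (i + 1) with ⟨hn, hwa⟩ | ⟨x, hx, hs, hwx⟩
          · rw [hwa]
            have h1 := (ha (i + 1) hn).2.1
            rwa [add_sub_cancel_right] at h1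
          · rw [hwx]
            exact hsome_mem (i + 1) x hx hs i (hmem i).2
      have hwinj : Function.Injective w := by
        intro i j hij
        rcases hwval i with ⟨hni, hwi⟩ | ⟨x, hx, hsi, hwi⟩ <;>
          rcases hwval j with ⟨hnj, hwj⟩ | ⟨y, hy, hsj, hwj⟩
        · exact hvinj (hni.trans hnj.symm)
        · exact absurd ((ha i hni).2.2) (by rw [← hwi, hij, hwj]; exact hy)
        · exact absurd ((ha j hnj).2.2) (by rw [← hwj, ← hij, hwi]; exact hx)
        · have hxy : x = y := by rw [← hwi, hij, hwj]
          apply hvinj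
          rw [hsi, hsj]
          simp [hxy]
      obtain ⟨x, y, hxy, ⟨i, hxi⟩, ⟨j, hyj⟩, hpE⟩ :=
        hcyc t w f ⟨ht2, hwinj, hfinj, hfEm, hwmem⟩
      exact finishing x y hxy hpE (Or.inl ⟨i, hxi⟩) (Or.inl ⟨j, hyj⟩)

  · -- connectivity
    have hmap : ∀ {x y : α}, (pairGraph (E.filter fun e => e.card = 2)).Adj x y →
        (pairGraph ((minimalEdges (contractEdges E e₀)).filter fun e => e.card = 2)).Adj
          (contractMap e₀ x) (contractMap e₀ y) := by
      intro x y hadj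
      obtain ⟨hxy, hmem⟩ := hadj
      rw [Finset.mem_filter] at hmem
      have hpm := hpush hxy hmem.1
      refine ⟨hpm.1, Finset.mem_filter.2 ⟨hpm.2, ?_⟩⟩
      rw [Finset.card_insert_of_notMem (by simp [hpm.1]), Finset.card_singleton]
    have hsurj : Function.Surjective (contractMap e₀) := by
      intro b
      cases b with
      | none =>
        obtain ⟨z, hz⟩ := hne e₀ he₀
        exact ⟨z, cm_none.2 hz⟩
      | some z =>
        refine ⟨z.1, ?_⟩
        unfold contractMap
        rw [dif_neg z.2]
    exact SimpleGraph.Connected.map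
      (⟨contractMap e₀, fun {_ _} h => hmap h⟩ :
        pairGraph (E.filter fun e => e.card = 2) →g
          pairGraph ((minimalEdges (contractEdges E e₀)).filter fun e => e.card = 2))
      hsurj hconn
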